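/- For all integers m, n ≥ 0, gcd(13^m − 302^n, 3·5·7·17) > 1; indeed 7 divides 13^m − 302^n when m ≡ 0 (mod 2), 3 divides it when n ≡ 0 (mod 2), 17 divides it when m ≡ n (mod 4), and 5 divides it when m ≡ −n (mod 4). -/

import Mathlib

/-! Modulo 7, 3, 17 and 5 the bases reduce to `13 ≡ -1, 302 ≡ 1`; `13 ≡ 1, 302 ≡ -1`;
`302 ≡ 13` with `13⁴ ≡ 1`; and `13 · 302 ≡ 1` with `13⁴ ≡ 1`. So `13^m - 302^n` vanishes
modulo 7 if `m` is even, modulo 3 if `n` is even, modulo 17 if `m ≡ n (mod 4)` and modulo 5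
if `m ≡ -n (mod 4)`. These classes cover every pair: if `m` and `n` are both odd, then
`m ≡ ±n (mod 4)`. -/

section CommMonoid

variable {M : Type*} [CommMonoid M] {a b : M} {k m n : ℕ}

theorem pow_eq_pow_of_pow_eq_one_of_modEq (ha : a ^ k = 1) (hmn : m ≡ n [MOD k]) :
    a ^ m = a ^ n := by
  rw [pow_eq_pow_mod m ha, pow_eq_pow_mod n ha, hmn]

theorem pow_eq_pow_of_mul_eq_one_of_dvd_add (hab : a * b = 1) (ha : a ^ k = 1)
    (hk : k ∣ m + n) : a ^ m = b ^ n := by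
  obtain ⟨j, hj⟩ := hk
  calc a ^ m = a ^ m * (a * b) ^ n := by rw [hab, one_pow, mul_one]
    _ = a ^ (m + n) * b ^ n := by rw [mul_pow, pow_add, mul_assoc]
    _ = b ^ n := by rw [hj, pow_mul, ha, one_pow, one_mul]

end CommMonoid

theorem Int.dvd_pow_sub_pow_of_zmod_eq {p : ℕ} {a b : ℤ} {m n : ℕ}
    (h : (a : ZMod p) ^ m = (b : ZMod p) ^ n) : (p : ℤ) ∣ a ^ m - b ^ n :=
  (ZMod.intCast_eq_intCast_iff_dvd_sub _ _ p).1 (by push_cast; exact h.symm)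

theorem Int.one_lt_gcd_of_dvd {p : ℕ} {x y : ℤ} (hp : 1 < p) (hx : (p : ℤ) ∣ x)
    (hy : (p : ℤ) ∣ y) (hy0 : y ≠ 0) : 1 < Int.gcd x y :=
  hp.trans_le (Nat.le_of_dvd (Int.gcd_pos_of_ne_zero_right x hy0)
    (Int.natCast_dvd_natCast.1 (Int.dvd_coe_gcd hx hy)))

section Divisors

variable {m n : ℕ}

theorem seven_dvd_13_pow_sub_302_pow (hm : 2 ∣ m) : (7 : ℤ) ∣ 13 ^ m - 302 ^ n := by
  apply Int.dvd_pow_sub_pow_of_zmod_eq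
  rw [show ((13 : ℤ) : ZMod 7) = -1 by decide, show ((302 : ℤ) : ZMod 7) = 1 by decide,
    (even_iff_two_dvd.2 hm).neg_one_pow, one_pow]

theorem three_dvd_13_pow_sub_302_pow (hn : 2 ∣ n) : (3 : ℤ) ∣ 13 ^ m - 302 ^ n := by
  apply Int.dvd_pow_sub_pow_of_zmod_eq
  rw [show ((13 : ℤ) : ZMod 3) = 1 by decide, show ((302 : ℤ) : ZMod 3) = -1 by decide,
    (even_iff_two_dvd.2 hn).neg_one_pow, one_pow]

theorem seventeen_dvd_13_pow_sub_302_pow (h : m ≡ n [MOD 4]) :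
    (17 : ℤ) ∣ 13 ^ m - 302 ^ n := by
  apply Int.dvd_pow_sub_pow_of_zmod_eq
  rw [show ((302 : ℤ) : ZMod 17) = 13 by decide]
  exact pow_eq_pow_of_pow_eq_one_of_modEq (by decide) h

theorem five_dvd_13_pow_sub_302_pow (h : 4 ∣ m + n) : (5 : ℤ) ∣ 13 ^ m - 302 ^ n :=
  Int.dvd_pow_sub_pow_of_zmod_eq (pow_eq_pow_of_mul_eq_one_of_dvd_add (by decide) (by decide) h)

end Divisors

theorem covering_mod_four (m n : ℕ) : 2 ∣ m ∨ 2 ∣ n ∨ m ≡ n [MOD 4] ∨ 4 ∣ m + n := by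
  unfold Nat.ModEq
  omega

/-- For all `m, n ≥ 0`, `gcd(13^m - 302^n, 3·5·7·17) > 1`; indeed `7` divides
`13^m - 302^n` when `m ≡ 0 (mod 2)`, `3` divides it when `n ≡ 0 (mod 2)`, `17`
divides it when `m ≡ n (mod 4)`, and `5` divides it when `m ≡ -n (mod 4)`. -/
theorem covering_example_13_302 :
    ∀ m n : ℕ,
      1 < Int.gcd ((13 : ℤ) ^ m - (302 : ℤ) ^ n) (3 * 5 * 7 * 17) ∧
      (2 ∣ m → (7 : ℤ) ∣ (13 : ℤ) ^ m - (302 : ℤ) ^ n) ∧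
      (2 ∣ n → (3 : ℤ) ∣ (13 : ℤ) ^ m - (302 : ℤ) ^ n) ∧
      (m ≡ n [MOD 4] → (17 : ℤ) ∣ (13 : ℤ) ^ m - (302 : ℤ) ^ n) ∧
      (4 ∣ m + n → (5 : ℤ) ∣ (13 : ℤ) ^ m - (302 : ℤ) ^ n) := by
  intro m n
  refine ⟨?_, seven_dvd_13_pow_sub_302_pow, three_dvd_13_pow_sub_302_pow,
    seventeen_dvd_13_pow_sub_302_pow, five_dvd_13_pow_sub_302_pow⟩
  rcases covering_mod_four m n with h | h | h | h
  · exact Int.one_lt_gcd_of_dvd (p := 7) (by norm_num) (seven_dvd_13_pow_sub_302_pow h)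
      (by norm_num) (by norm_num)
  · exact Int.one_lt_gcd_of_dvd (p := 3) (by norm_num) (three_dvd_13_pow_sub_302_pow h)
      (by norm_num) (by norm_num)
  · exact Int.one_lt_gcd_of_dvd (p := 17) (by norm_num)
      (seventeen_dvd_13_pow_sub_302_pow h) (by norm_num) (by norm_num)
  · exact Int.one_lt_gcd_of_dvd (p := 5) (by norm_num) (five_dvd_13_pow_sub_302_pow h)
      (by norm_num) (by norm_num)
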